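/- arXiv:1110.4580 — 2 statements merged into one kernel-verified Lean document; each statement's English description precedes it below -/
import Mathlib

section
/- If H is a bounded self-adjoint operator on a Hilbert space and Π is an orthogonal projection with ‖[H, Π]‖ ≤ ε, then for all t ∈ ℝ, ‖(e^{itH} − e^{it ΠHΠ}) Π‖ ≤ ε |t| e^{|t| ‖H‖} (in particular the dynamics generated by H, restricted to Ran Π, is approximated by the dynamics of the compressed Hamiltonian ΠHΠ up to an error growing at most linearly-exponentially in time). -/
/-!
Write `A = PHP`. Idempotence of `P` gives `(H - A)P = [H, P]P` and `AᵏP = P·AᵏP`, so every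
term of the telescoping sum `(Hⁿ⁺¹ - Aⁿ⁺¹)P = H(Hⁿ - Aⁿ)P + (H - A)AⁿP` is small, and with
`‖P‖ ≤ 1` one gets `‖(Hⁿ⁺¹ - Aⁿ⁺¹)P‖ ≤ (n + 1) ε ‖H‖ⁿ`. Comparing the exponential series of
`itH` and `itA` term by term then yields `ε |t| e^{|t| ‖H‖}`.
-/

open NormedSpace
open scoped Nat

section Compression

variable {R : Type*} [NormedRing R]

theorem norm_pow_succ_sub_pow_succ_mul_le (H A P : R) {δ r : ℝ} (hH : ‖H‖ ≤ r)
    (hstep : ∀ k : ℕ, ‖(H - A) * (A ^ k * P)‖ ≤ δ * r ^ k) (n : ℕ) :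
    ‖(H ^ (n + 1) - A ^ (n + 1)) * P‖ ≤ (n + 1) * δ * r ^ n := by
  induction n with
  | zero => simpa using hstep 0
  | succ n ih =>
    have hsplit : (H ^ (n + 2) - A ^ (n + 2)) * P
        = H * ((H ^ (n + 1) - A ^ (n + 1)) * P) + (H - A) * (A ^ (n + 1) * P) := by
      rw [pow_succ' H (n + 1), pow_succ' A (n + 1)]
      noncomm_ring
    calc ‖(H ^ (n + 2) - A ^ (n + 2)) * P‖
        ≤ ‖H‖ * ‖(H ^ (n + 1) - A ^ (n + 1)) * P‖ + ‖(H - A) * (A ^ (n + 1) * P)‖ := by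
          rw [hsplit]
          exact (norm_add_le _ _).trans (by gcongr; exact norm_mul_le _ _)
      _ ≤ r * ((n + 1) * δ * r ^ n) + δ * r ^ (n + 1) :=
          add_le_add (mul_le_mul hH ih (norm_nonneg _) ((norm_nonneg H).trans hH)) (hstep _)
      _ = ((n + 1 : ℕ) + 1) * δ * r ^ (n + 1) := by push_cast; ring

theorem IsIdempotentElem.mul_compression_pow_mul {P : R} (hP : IsIdempotentElem P) (H : R)
    (k : ℕ) : P * ((P * H * P) ^ k * P) = (P * H * P) ^ k * P := by
  induction k with
  | zero => simpa using hP.eq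
  | succ k ih => rw [pow_succ', mul_assoc, mul_assoc, ← mul_assoc P, ← mul_assoc P, hP.eq]

theorem IsIdempotentElem.sub_compression_mul {P : R} (hP : IsIdempotentElem P) (H : R) :
    (H - P * H * P) * P = (H * P - P * H) * P := by
  simp only [sub_mul, mul_assoc, hP.eq]

theorem norm_compression_le {P : R} (hP : ‖P‖ ≤ 1) (H : R) : ‖P * H * P‖ ≤ ‖H‖ :=
  calc ‖P * H * P‖ ≤ ‖P‖ * ‖H‖ * ‖P‖ := norm_mul₃_le
    _ ≤ 1 * ‖H‖ * 1 := by gcongr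
    _ = ‖H‖ := by ring

theorem norm_compression_pow_mul_le {P : R} (hP : ‖P‖ ≤ 1) (H : R) (k : ℕ) :
    ‖(P * H * P) ^ k * P‖ ≤ ‖H‖ ^ k := by
  induction k with
  | zero => simpa using hP
  | succ k ih =>
    calc ‖(P * H * P) ^ (k + 1) * P‖ = ‖P * H * P * ((P * H * P) ^ k * P)‖ := by
          rw [pow_succ', mul_assoc]
      _ ≤ ‖H‖ * ‖H‖ ^ k := (norm_mul_le _ _).trans (by gcongr; exact norm_compression_le hP H)
      _ = ‖H‖ ^ (k + 1) := (pow_succ' _ _).symm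

theorem norm_sub_compression_mul_compression_pow_mul_le {P : R} (hP : IsIdempotentElem P)
    (hP1 : ‖P‖ ≤ 1) (H : R) (k : ℕ) :
    ‖(H - P * H * P) * ((P * H * P) ^ k * P)‖ ≤ ‖H * P - P * H‖ * ‖H‖ ^ k := by
  rw [← hP.mul_compression_pow_mul, ← mul_assoc, hP.sub_compression_mul]
  calc ‖(H * P - P * H) * P * ((P * H * P) ^ k * P)‖
      ≤ ‖H * P - P * H‖ * ‖P‖ * ‖(P * H * P) ^ k * P‖ := norm_mul₃_le
    _ ≤ ‖H * P - P * H‖ * 1 * ‖H‖ ^ k := by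
        gcongr; exact norm_compression_pow_mul_le hP1 H k
    _ = ‖H * P - P * H‖ * ‖H‖ ^ k := by ring

end Compression

section Exponential

variable {𝕂 𝔸 : Type*} [RCLike 𝕂] [NormedRing 𝔸] [NormedAlgebra 𝕂 𝔸] [CompleteSpace 𝔸]

theorem norm_exp_smul_sub_exp_smul_mul_le (X Y P : 𝔸) {δ r : ℝ}
    (h : ∀ n : ℕ, ‖(X ^ (n + 1) - Y ^ (n + 1)) * P‖ ≤ (n + 1) * δ * r ^ n) (u : 𝕂) :
    ‖(exp (u • X) - exp (u • Y)) * P‖ ≤ δ * ‖u‖ * Real.exp (‖u‖ * r) := by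
  set f : ℕ → 𝔸 := fun n => ((n ! : 𝕂)⁻¹ * u ^ n) • ((X ^ n - Y ^ n) * P)
  have hf : HasSum f ((exp (u • X) - exp (u • Y)) * P) := by
    have := ((exp_series_hasSum_exp' (𝕂 := 𝕂) (u • X)).sub
      (exp_series_hasSum_exp' (𝕂 := 𝕂) (u • Y))).mul_right P
    refine this.congr_fun fun n => ?_
    simp only [f, smul_pow, smul_smul, sub_mul, smul_sub, smul_mul_assoc]
  have hf_succ : HasSum (fun n => f (n + 1)) ((exp (u • X) - exp (u • Y)) * P) := by
    simpa [f] using (hasSum_nat_add_iff' 1).mpr hf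
  have hg : HasSum (fun n : ℕ => δ * ‖u‖ * ((‖u‖ * r) ^ n / n !))
      (δ * ‖u‖ * Real.exp (‖u‖ * r)) :=
    (Real.exp_eq_exp_ℝ ▸ expSeries_div_hasSum_exp (‖u‖ * r)).mul_left _
  refine hf_succ.norm_le_of_bounded hg fun n => ?_
  calc ‖f (n + 1)‖ = ‖u‖ ^ (n + 1) / (n + 1)! * ‖(X ^ (n + 1) - Y ^ (n + 1)) * P‖ := by
        simp [f, norm_smul, div_eq_inv_mul]
    _ ≤ ‖u‖ ^ (n + 1) / (n + 1)! * ((n + 1) * δ * r ^ n) := by gcongr; exact h n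
    _ = δ * ‖u‖ * ((‖u‖ * r) ^ n / n !) := by
        rw [Nat.factorial_succ]; push_cast; field_simp; ring

end Exponential

theorem adiabatic_dynamics_general {𝓗 : Type*} [NormedAddCommGroup 𝓗] [InnerProductSpace ℂ 𝓗]
    [CompleteSpace 𝓗] (H P : 𝓗 →L[ℂ] 𝓗)
    (hPproj : P ∘L P = P) (hPsa : IsSelfAdjoint P)
    (ε : ℝ) (hcomm : ‖H ∘L P - P ∘L H‖ ≤ ε) :
    ∀ t : ℝ,
      ‖(NormedSpace.exp ((Complex.I * t) • H) -
          NormedSpace.exp ((Complex.I * t) • (P ∘L H ∘L P))) ∘L P‖ ≤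
        ε * |t| * Real.exp (|t| * ‖H‖) := by
  intro t
  have hP : IsIdempotentElem P := hPproj
  have hP1 : ‖P‖ ≤ 1 := IsStarProjection.norm_le P ⟨hP, hPsa⟩
  have hpow : ∀ n : ℕ, ‖(H ^ (n + 1) - (P * H * P) ^ (n + 1)) * P‖ ≤ (n + 1) * ε * ‖H‖ ^ n :=
    norm_pow_succ_sub_pow_succ_mul_le H (P * H * P) P le_rfl fun k =>
      (norm_sub_compression_mul_compression_pow_mul_le hP hP1 H k).trans (by gcongr; exact hcomm)
  have hnorm : ‖Complex.I * t‖ = |t| := by simp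
  rw [show P ∘L H ∘L P = P * H * P from (mul_assoc P H P).symm, ← hnorm]
  exact norm_exp_smul_sub_exp_smul_mul_le H (P * H * P) P hpow (Complex.I * t)

/-- if ‖[H, P]‖ ≤ ε for an orthogonal projection P, the dynamics of H on
Ran P is approximated by that of the compressed Hamiltonian PHP. -/
theorem adiabatic_dynamics {𝓗 : Type*} [NormedAddCommGroup 𝓗] [InnerProductSpace ℂ 𝓗]
    [CompleteSpace 𝓗] (H P : 𝓗 →L[ℂ] 𝓗) (hH : IsSelfAdjoint H)
    (hPproj : P ∘L P = P) (hPsa : IsSelfAdjoint P)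
    (ε : ℝ) (hcomm : ‖H ∘L P - P ∘L H‖ ≤ ε) :
    ∀ t : ℝ,
      ‖(NormedSpace.exp ((Complex.I * t) • H) -
          NormedSpace.exp ((Complex.I * t) • (P ∘L H ∘L P))) ∘L P‖ ≤
        ε * |t| * Real.exp (|t| * ‖H‖) :=
  adiabatic_dynamics_general H P hPproj hPsa ε hcomm
end

section
/- If H and H' are bounded self-adjoint operators on Hilbert spaces 𝓗 and 𝓗' and U : 𝓗 → 𝓗' is unitary with ‖U H U* − H'‖ ≤ ε, then the Hausdorff distance between Spec(H) and Spec(H') is at most ε. -/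
open Metric

/-- For normal `b`, the resolvent `(z - b)⁻¹` is `cfc (fun x ↦ (z - x)⁻¹) b`, whose norm is the
supremum of `|z - x|⁻¹` over the spectrum. -/
lemma IsStarNormal.norm_resolvent_le {A : Type*} [CStarAlgebra A] {b : A} [IsStarNormal b]
    {z : ℂ} (hz : 0 < infDist z (spectrum ℂ b)) :
    ‖resolvent b z‖ ≤ (infDist z (spectrum ℂ b))⁻¹ := by
  have hne : ∀ x ∈ spectrum ℂ b, z - x ≠ 0 := fun x hx h ↦
    hz.ne' (infDist_zero_of_mem (sub_eq_zero.mp h ▸ hx))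
  have hres : resolvent b z = cfc (fun x : ℂ ↦ (z - x)⁻¹) b := by
    rw [cfc_inv (fun x : ℂ ↦ z - x) b hne, cfc_sub .., cfc_const .., cfc_id' ..]
    rfl
  rw [hres]
  refine norm_cfc_le (by positivity) fun x hx ↦ ?_
  rw [norm_inv, ← dist_eq_norm]
  exact inv_anti₀ hz (infDist_le_dist_of_mem hx)

/-- If `z` were farther than `‖a - b‖` from the spectrum of `b`, then `z - a` would lie within
`‖(z - b)⁻¹‖⁻¹` of the unit `z - b`, hence be a unit itself. -/
lemma infDist_spectrum_le_norm_sub {A : Type*} [CStarAlgebra A] {a b : A} [IsStarNormal b]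
    {z : ℂ} (hz : z ∈ spectrum ℂ a) : infDist z (spectrum ℂ b) ≤ ‖a - b‖ := by
  nontriviality A
  by_contra! hlt
  have hd : 0 < infDist z (spectrum ℂ b) := (norm_nonneg _).trans_lt hlt
  obtain ⟨u, hu⟩ : IsUnit (algebraMap ℂ A z - b) :=
    spectrum.notMem_iff.mp fun h ↦ hd.ne' (infDist_zero_of_mem h)
  have hres : resolvent b z = ↑u⁻¹ := by rw [resolvent, ← hu, Ring.inverse_unit]
  have hnear : ‖(algebraMap ℂ A z - a) - u‖ < ‖(↑u⁻¹ : A)‖⁻¹ := calc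
    ‖(algebraMap ℂ A z - a) - u‖ = ‖a - b‖ := by rw [hu, sub_sub_sub_cancel_left, norm_sub_rev]
    _ < infDist z (spectrum ℂ b) := hlt
    _ ≤ ‖(↑u⁻¹ : A)‖⁻¹ :=
      (le_inv_comm₀ (Units.norm_pos _) hd).mp (hres ▸ IsStarNormal.norm_resolvent_le hd)
  exact hz (u.ofNearby _ hnear).isUnit

lemma hausdorffDist_spectrum_le_norm_sub {A : Type*} [CStarAlgebra A] {a b : A}
    [IsStarNormal a] [IsStarNormal b] :
    hausdorffDist (spectrum ℂ a) (spectrum ℂ b) ≤ ‖a - b‖ :=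
  hausdorffDist_le_of_infDist (norm_nonneg _) (fun _ ↦ infDist_spectrum_le_norm_sub)
    fun _ hz ↦ norm_sub_rev a b ▸ infDist_spectrum_le_norm_sub hz

/-- approximate unitary equivalence implies the spectra are close in
Hausdorff distance. -/
theorem hausdorff_spectrum_estimate {𝓗 𝓗' : Type*}
    [NormedAddCommGroup 𝓗] [InnerProductSpace ℂ 𝓗] [CompleteSpace 𝓗]
    [NormedAddCommGroup 𝓗'] [InnerProductSpace ℂ 𝓗'] [CompleteSpace 𝓗']
    (H : 𝓗 →L[ℂ] 𝓗) (H' : 𝓗' →L[ℂ] 𝓗') (hH : IsSelfAdjoint H) (hH' : IsSelfAdjoint H')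
    (U : 𝓗 ≃ₗᵢ[ℂ] 𝓗') (ε : ℝ)
    (hclose : ‖(U.toContinuousLinearEquiv : 𝓗 →L[ℂ] 𝓗') ∘L H ∘L
        (U.symm.toContinuousLinearEquiv : 𝓗' →L[ℂ] 𝓗) - H'‖ ≤ ε) :
    Metric.hausdorffDist (spectrum ℂ H) (spectrum ℂ H') ≤ ε := by
  have hK : IsSelfAdjoint (U.conjStarAlgEquiv H) := hH.map _
  have := hK.isStarNormal
  have := hH'.isStarNormal
  rw [← AlgEquiv.spectrum_eq U.conjStarAlgEquiv H]
  exact hausdorffDist_spectrum_le_norm_sub.trans hclose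
end
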